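/- For symmetric contractual contracts c_A = A says ((B says b) ↠ a) and c_B = B says ((A says a) ↠ b), it holds that c_A ∧ c_B ⊢ (A says a) ∧ (B says b). -/

import Mathlib

/-- Formulae of the contract logic PCL: intuitionistic propositional logic
extended with contractual implication ↠ and an indexed lax modality `says`. -/
inductive PCL (P At : Type) where
  | atom : At → PCL P At
  | top : PCL P At
  | bot : PCL P At
  | and : PCL P At → PCL P At → PCL P At
  | or : PCL P At → PCL P At → PCL P At
  | imp : PCL P At → PCL P At → PCL P At
  | cimp : PCL P At → PCL P At → PCL P At
  | says : P → PCL P At → PCL P At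

/-- Hilbert-style provability for PCL: intuitionistic propositional axioms,
modus ponens, the contractual-implication axioms
⊤↠⊤, (φ↠φ)→φ, (φ'→φ)→(φ↠ψ)→(ψ→ψ')→(φ'↠ψ'),
and the lax `says` axioms. -/
inductive Prov {P At : Type} (Γ : Set (PCL P At)) : PCL P At → Prop where
  | ax {φ} : φ ∈ Γ → Prov Γ φ
  | mp {φ ψ} : Prov Γ (.imp φ ψ) → Prov Γ φ → Prov Γ ψ
  | k (φ ψ) : Prov Γ (.imp φ (.imp ψ φ))
  | s (φ ψ χ) : Prov Γ (.imp (.imp φ (.imp ψ χ)) (.imp (.imp φ ψ) (.imp φ χ)))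
  | andI (φ ψ) : Prov Γ (.imp φ (.imp ψ (.and φ ψ)))
  | andE1 (φ ψ) : Prov Γ (.imp (.and φ ψ) φ)
  | andE2 (φ ψ) : Prov Γ (.imp (.and φ ψ) ψ)
  | orI1 (φ ψ) : Prov Γ (.imp φ (.or φ ψ))
  | orI2 (φ ψ) : Prov Γ (.imp ψ (.or φ ψ))
  | orE (φ ψ χ) : Prov Γ (.imp (.imp φ χ) (.imp (.imp ψ χ) (.imp (.or φ ψ) χ)))
  | topI : Prov Γ .top
  | botE (φ) : Prov Γ (.imp .bot φ)
  | ctop : Prov Γ (.cimp .top .top)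
  | cfix (φ) : Prov Γ (.imp (.cimp φ φ) φ)
  | cmono (φ φ' ψ ψ') :
      Prov Γ (.imp (.imp φ' φ) (.imp (.cimp φ ψ) (.imp (.imp ψ ψ') (.cimp φ' ψ'))))
  | saysI (A φ) : Prov Γ (.imp φ (.says A φ))
  | saysIdem (A φ) : Prov Γ (.imp (.says A (.says A φ)) (.says A φ))
  | saysMono (A φ ψ) : Prov Γ (.imp (.imp φ ψ) (.imp (.says A φ) (.says A ψ)))

/-!
Write `α = A says a` and `β = B says b`. Under `B says (α ↠ b)`, and since `↠` is stronger than
`→`, laxity of `says` gives `α → β`, hence `a → β`. A contract `β ↠ a` whose premise follows from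
its conclusion collapses by monotonicity to `a ↠ a`, i.e. to `a`; so `A says (β ↠ a)` yields `α`,
and then `β`.
-/

namespace Prov

variable {P At : Type} {Γ Δ : Set (PCL P At)} {φ ψ χ : PCL P At}

theorem mono (hΓΔ : Γ ⊆ Δ) (h : Prov Γ φ) : Prov Δ φ :=
  h.rec (fun hφ => ax (hΓΔ hφ)) (fun _ _ => mp) k s andI andE1 andE2 orI1 orI2 orE topI botE ctop
    cfix cmono saysI saysIdem saysMono

theorem imp_self (φ : PCL P At) : Prov Γ (φ.imp φ) :=
  mp (mp (s φ (φ.imp φ) φ) (k φ (φ.imp φ))) (k φ φ)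

theorem imp_intro (φ : PCL P At) (h : Prov Γ ψ) : Prov Γ (φ.imp ψ) :=
  mp (k ψ φ) h

theorem deduction (h : Prov (insert φ Γ) ψ) : Prov Γ (φ.imp ψ) := by
  induction h with
  | ax hχ =>
    rcases hχ with rfl | hχ
    exacts [imp_self _, imp_intro _ (ax hχ)]
  | mp _ _ ih₁ ih₂ => exact mp (mp (s _ _ _) ih₁) ih₂
  | _ => exact imp_intro _ (by aesop (add 50% constructors Prov))

theorem imp_trans (h₁ : Prov Γ (φ.imp ψ)) (h₂ : Prov Γ (ψ.imp χ)) : Prov Γ (φ.imp χ) :=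
  deduction <| mp (mono (Set.subset_insert _ _) h₂)
    (mp (mono (Set.subset_insert _ _) h₁) (ax (Set.mem_insert _ _)))

theorem says_map (A : P) (h : Prov Γ (φ.imp ψ)) (hφ : Prov Γ (.says A φ)) :
    Prov Γ (.says A ψ) :=
  mp (mp (saysMono A φ ψ) h) hφ

theorem says_mp (A : P) (hf : Prov Γ (.says A (φ.imp ψ))) (hφ : Prov Γ (.says A φ)) :
    Prov Γ (.says A ψ) :=
  mp (saysIdem A ψ) <| says_map A
    (deduction (says_map A (ax (Set.mem_insert _ _)) (mono (Set.subset_insert _ _) hφ))) hf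

theorem of_cimp_of_imp (hc : Prov Γ (φ.cimp ψ)) (h : Prov Γ (ψ.imp φ)) : Prov Γ ψ :=
  mp (cfix ψ) (mp (mp (mp (cmono φ ψ ψ ψ) h) hc) (imp_self ψ))

-- With `φ` provable, `φ ↠ ψ` weakens to `⊤ ↠ ψ`, and `ψ → ⊤` holds.
theorem cimp_mp (hc : Prov Γ (φ.cimp ψ)) (hφ : Prov Γ φ) : Prov Γ ψ :=
  of_cimp_of_imp (mp (mp (mp (cmono φ .top ψ ψ) (imp_intro _ hφ)) hc) (imp_self ψ))
    (imp_intro _ topI)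

theorem cimp_imp_imp (φ ψ : PCL P At) : Prov Γ ((φ.cimp ψ).imp (φ.imp ψ)) :=
  deduction <| deduction <|
    cimp_mp (ax (Set.mem_insert_of_mem _ (Set.mem_insert _ _))) (ax (Set.mem_insert _ _))

theorem imp_says_of_says_cimp {A : P} (hc : Prov Γ (.says A (φ.cimp ψ))) :
    Prov Γ (φ.imp (.says A ψ)) :=
  deduction <| says_mp A (says_map A (cimp_imp_imp φ ψ) (mono (Set.subset_insert _ _) hc))
    (mp (saysI A φ) (ax (Set.mem_insert _ _)))

theorem says_of_says_cimp_of_imp {A : P} (hc : Prov Γ (.says A (φ.cimp ψ)))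
    (h : Prov Γ (ψ.imp φ)) : Prov Γ (.says A ψ) :=
  says_map A (deduction (of_cimp_of_imp (ax (Set.mem_insert _ _)) (mono (Set.subset_insert _ _) h)))
    hc

theorem says_and_says_of_says_cimp {A B : P}
    (hcA : Prov Γ (.says A ((PCL.says B ψ).cimp φ)))
    (hcB : Prov Γ (.says B ((PCL.says A φ).cimp ψ))) :
    Prov Γ ((PCL.says A φ).and (.says B ψ)) :=
  have hαβ := imp_says_of_says_cimp hcB
  have hα := says_of_says_cimp_of_imp hcA (imp_trans (saysI A φ) hαβ)
  mp (mp (andI _ _) hα) (mp hαβ hα)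

end Prov

/-- for symmetric contractual contracts
c_A = A says ((B says b) ↠ a) and c_B = B says ((A says a) ↠ b),
c_A ∧ c_B ⊢ (A says a) ∧ (B says b). -/
theorem stmt11 {P At : Type} (A B : P) (a b : At) :
    Prov ({PCL.and (.says A (.cimp (.says B (.atom b)) (.atom a)))
                   (.says B (.cimp (.says A (.atom a)) (.atom b)))} : Set (PCL P At))
      (.and (.says A (.atom a)) (.says B (.atom b))) :=
  Prov.says_and_says_of_says_cimp (.mp (.andE1 _ _) (.ax rfl)) (.mp (.andE2 _ _) (.ax rfl))
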